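/- arXiv:2310.10366 — 4 statements merged into one kernel-verified Lean document; each statement's English description precedes it below -/
import Mathlib

section
/- The number of integer points x in Z^n such that both x and -x lie in the monotone simplex Δ_n = {x ∈ R^n : x_i ≥ -1 for all i, and Σ x_i ≤ 1} equals the coefficient of X^{n+1} in the polynomial (1 + X + X^2)^{n+1}. -/
open Polynomial

lemma coeff_pow_count (m k : ℕ) :
    ((1 + X + X ^ 2 : Polynomial ℕ) ^ m).coeff k =
      (Finset.univ.filter (fun y : Fin m → Fin 3 => ∑ i, (y i : ℕ) = k)).card := by
  have h : (1 + X + X ^ 2 : Polynomial ℕ) = ∑ j : Fin 3, X ^ (j : ℕ) := by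
    simp [Fin.sum_univ_three]
  have h2 : ((1 + X + X ^ 2 : Polynomial ℕ)) ^ m
      = ∏ _i : Fin m, ∑ j : Fin 3, X ^ (j : ℕ) := by
    rw [Finset.prod_const, h]; simp
  rw [h2, Finset.prod_univ_sum]
  simp only [Finset.prod_pow_eq_pow_sum]
  rw [finset_sum_coeff]
  simp only [coeff_X_pow, Fintype.piFinset_univ]
  rw [Finset.card_filter]
  exact Finset.sum_congr rfl fun y _ => if_congr eq_comm rfl rfl

/-- The Ewald set of the monotone simplex Δ_n: integer points x with x ∈ Δ_n and -x ∈ Δ_n. -/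
theorem ewald_monotone_simplex_card (n : ℕ) :
    ({x : Fin n → ℤ |
        ((∀ i, -1 ≤ x i) ∧ (∑ i, x i) ≤ 1) ∧
        ((∀ i, -1 ≤ -(x i)) ∧ (∑ i, -(x i)) ≤ 1)}).ncard =
      (((1 + X + X ^ 2 : Polynomial ℕ)) ^ (n + 1)).coeff (n + 1) := by
  rw [coeff_pow_count]
  set T : Finset (Fin (n + 1) → Fin 3) :=
    Finset.univ.filter (fun y => ∑ i, (y i : ℕ) = n + 1) with hT
  set g : (Fin (n + 1) → Fin 3) → (Fin n → ℤ) :=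
    fun y i => (y i.castSucc : ℤ) - 1 with hg
  have hsum : ∀ y : Fin (n + 1) → Fin 3,
      ∑ i, (y i : ℕ) = (∑ i : Fin n, (y i.castSucc : ℕ)) + (y (Fin.last n) : ℕ) := by
    intro y; rw [Fin.sum_univ_castSucc]
  have hinj : Set.InjOn g T := by
    intro y hy y' hy' hgy
    simp only [hT, Finset.coe_filter, Set.mem_setOf_eq] at hy hy'
    have hc : ∀ i : Fin n, y i.castSucc = y' i.castSucc := by
      intro i
      have := congrFun hgy i
      simp only [hg] at this
      have : (y i.castSucc : ℤ) = (y' i.castSucc : ℤ) := by omega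
      exact Fin.ext (by exact_mod_cast this)
    have hcs : (∑ i : Fin n, (y i.castSucc : ℕ)) = ∑ i : Fin n, (y' i.castSucc : ℕ) :=
      Finset.sum_congr rfl fun i _ => by rw [hc i]
    have hlast : y (Fin.last n) = y' (Fin.last n) := by
      apply Fin.ext
      have h1 := hy.2; have h2 := hy'.2
      rw [hsum y] at h1; rw [hsum y'] at h2
      omega
    funext i
    induction i using Fin.lastCases with
    | last => exact hlast
    | cast i => exact hc i
  have himg : g '' T = {x : Fin n → ℤ |
        ((∀ i, -1 ≤ x i) ∧ (∑ i, x i) ≤ 1) ∧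
        ((∀ i, -1 ≤ -(x i)) ∧ (∑ i, -(x i)) ≤ 1)} := by
    ext x
    simp only [Set.mem_image, hT, Finset.coe_filter, Set.mem_setOf_eq, Finset.mem_univ,
      true_and, Set.mem_setOf_eq]
    constructor
    · rintro ⟨y, hy, rfl⟩
      have hb : ∀ i : Fin (n + 1), (y i : ℕ) ≤ 2 := fun i => Nat.lt_succ_iff.mp (y i).isLt
      have hsx : ∑ i : Fin n, g y i = (∑ i : Fin n, (y i.castSucc : ℕ) : ℤ) - n := by
        simp only [hg]
        rw [Finset.sum_sub_distrib]
        simp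
      have hcs : (∑ i : Fin n, (y i.castSucc : ℕ)) + (y (Fin.last n) : ℕ) = n + 1 := by
        rw [← hsum y]; exact hy
      have hlb : (y (Fin.last n) : ℕ) ≤ 2 := hb _
      have hcs' : (∑ i : Fin n, ((y i.castSucc : ℕ) : ℤ)) + ((y (Fin.last n) : ℕ) : ℤ)
          = (n : ℤ) + 1 := by exact_mod_cast hcs
      refine ⟨⟨fun i => ?_, ?_⟩, ⟨fun i => ?_, ?_⟩⟩
      · simp only [hg]; omega
      · rw [hsx]; omega
      · simp only [hg]
        have := hb i.castSucc
        omega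
      · rw [Finset.sum_neg_distrib, hsx]; omega
    · rintro ⟨⟨h1, h2⟩, h3, h4⟩
      have h3' : ∀ i, x i ≤ 1 := fun i => by have := h3 i; omega
      have h4' : -1 ≤ ∑ i, x i := by
        rw [Finset.sum_neg_distrib] at h4; omega
      have hub : ∀ i, ((x i + 1).toNat) < 3 := by
        intro i; have := h1 i; have := h3' i; omega
      have hlub : (1 - ∑ i, x i).toNat < 3 := by omega
      refine ⟨Fin.snoc (fun i => ⟨(x i + 1).toNat, hub i⟩) ⟨(1 - ∑ i, x i).toNat, hlub⟩,
        ?_, ?_⟩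
      · rw [hsum]
        simp only [Fin.snoc_castSucc, Fin.snoc_last]
        have : ((∑ i : Fin n, ((x i + 1).toNat) : ℕ) : ℤ) = ∑ i : Fin n, (x i + 1) := by
          push_cast
          exact Finset.sum_congr rfl fun i _ => Int.toNat_of_nonneg (by have := h1 i; omega)
        have hs2 : ∑ i : Fin n, (x i + 1) = (∑ i, x i) + n := by
          rw [Finset.sum_add_distrib]; simp
        omega
      · funext i
        simp only [hg, Fin.snoc_castSucc]
        have := h1 i
        omega
  rw [← himg, Set.ncard_image_of_injOn hinj, Set.ncard_coe_finset]
end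

section
/- For n ≥ 2 and 0 ≤ k ≤ n-1, the number of integer points x with both x and -x in SSB(n,k) equals [X^n](1+X+X^2)^n + 2·[X^{n-k}](1+X+X^2)^n, where [X^m]f denotes the coefficient of X^m in f. -/
open Polynomial Finset

private def cnt (m t : ℕ) : ℕ :=
  (Finset.univ.filter fun z : Fin m → Fin 3 => ∑ i, (z i : ℕ) = t).card

private lemma coeff_pow_cnt (m t : ℕ) :
    ((1 + X + X ^ 2 : Polynomial ℕ) ^ m).coeff t = cnt m t := by
  have h1 : (1 + X + X ^ 2 : Polynomial ℕ) = ∑ a : Fin 3, X ^ (a : ℕ) := by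
    rw [Fin.sum_univ_three]; simp [pow_one]
  have h2 : ((1 + X + X ^ 2 : Polynomial ℕ) ^ m)
      = ∑ z : Fin m → Fin 3, X ^ (∑ i, (z i : ℕ)) := by
    calc ((1 + X + X ^ 2 : Polynomial ℕ) ^ m)
        = ∏ _i : Fin m, ∑ a ∈ (univ : Finset (Fin 3)), X ^ (a : ℕ) := by
          rw [Finset.prod_const, Finset.card_univ, Fintype.card_fin, h1]
      _ = ∑ z ∈ Fintype.piFinset (fun _ : Fin m => (univ : Finset (Fin 3))),
            ∏ i, X ^ ((z i : ℕ)) := Finset.prod_univ_sum _ _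
      _ = ∑ z : Fin m → Fin 3, X ^ (∑ i, (z i : ℕ)) := by
          rw [Fintype.piFinset_univ]
          exact Finset.sum_congr rfl fun z _ => Finset.prod_pow_eq_pow_sum _ _ _
  rw [h2, Polynomial.finset_sum_coeff]
  simp only [Polynomial.coeff_X_pow]
  rw [cnt, Finset.card_filter]
  exact Finset.sum_congr rfl fun z _ => by simp [eq_comm]

private lemma sum_le (m : ℕ) (z : Fin m → Fin 3) : ∑ i, (z i : ℕ) ≤ 2 * m := by
  have : ∑ i, (z i : ℕ) ≤ ∑ _i : Fin m, 2 :=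
    Finset.sum_le_sum fun i _ => Nat.lt_succ_iff.mp (z i).is_lt
  simpa [mul_comm] using this

private lemma sum_rev (m : ℕ) (z : Fin m → Fin 3) :
    ∑ i, (((z i).rev : Fin 3) : ℕ) + ∑ i, (z i : ℕ) = 2 * m := by
  rw [← Finset.sum_add_distrib]
  have h : ∀ i : Fin m, (((z i).rev : Fin 3) : ℕ) + (z i : ℕ) = 2 := by
    intro i
    have h1 : (z i : ℕ) < 3 := (z i).is_lt
    simp [Fin.val_rev]; omega
  rw [Finset.sum_congr rfl fun i _ => h i]
  simp [mul_comm]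

private lemma cnt_zero (m t : ℕ) (h : 2 * m < t) : cnt m t = 0 := by
  rw [cnt, Finset.card_eq_zero, Finset.filter_eq_empty_iff]
  intro z _ hz
  have := sum_le m z
  omega

private lemma cnt_symm (m t : ℕ) (h : t ≤ 2 * m) : cnt m (2 * m - t) = cnt m t := by
  rw [cnt, cnt]
  apply Finset.card_nbij' (fun z i => (z i).rev) (fun z i => (z i).rev)
  · intro z hz
    simp only [Finset.mem_coe, Finset.mem_filter, Finset.mem_univ, true_and] at hz ⊢
    have := sum_rev m z
    omega
  · intro z hz
    simp only [Finset.mem_coe, Finset.mem_filter, Finset.mem_univ, true_and] at hz ⊢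
    have := sum_rev m z
    omega
  · intro z _; funext i; simp
  · intro z _; funext i; simp

private lemma card_cons_split (m : ℕ) (P : (Fin (m + 1) → Fin 3) → Prop) [DecidablePred P] :
    (Finset.univ.filter P).card
      = ∑ a : Fin 3, (Finset.univ.filter fun z : Fin m → Fin 3 => P (Fin.cons a z)).card := by
  rw [Finset.card_filter]
  rw [← Equiv.sum_comp (Fin.consEquiv (fun _ : Fin (m + 1) => Fin 3))
    (fun y => if P y then 1 else 0)]
  rw [Fintype.sum_prod_type]
  exact Finset.sum_congr rfl fun a _ => by rw [Finset.card_filter]; rfl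

private lemma card_three (m t1 t2 t3 : ℕ) (h12 : t1 ≠ t2) (h13 : t1 ≠ t3) (h23 : t2 ≠ t3) :
    (Finset.univ.filter fun z : Fin m → Fin 3 =>
        ∑ i, (z i : ℕ) = t1 ∨ ∑ i, (z i : ℕ) = t2 ∨ ∑ i, (z i : ℕ) = t3).card
      = cnt m t1 + cnt m t2 + cnt m t3 := by
  rw [Finset.filter_or, Finset.filter_or]
  rw [Finset.card_union_of_disjoint, Finset.card_union_of_disjoint]
  · rw [cnt, cnt, cnt]; ring
  · simp only [Finset.disjoint_left, Finset.mem_filter]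
    rintro z ⟨_, hz⟩ ⟨_, h⟩; omega
  · simp only [Finset.disjoint_left, Finset.mem_filter, Finset.mem_union]
    rintro z ⟨_, hz⟩ ⟨_, h | h⟩ <;> omega

private lemma card_two (m t1 t2 : ℕ) (h12 : t1 ≠ t2) :
    (Finset.univ.filter fun z : Fin m → Fin 3 =>
        ∑ i, (z i : ℕ) = t1 ∨ ∑ i, (z i : ℕ) = t2).card = cnt m t1 + cnt m t2 := by
  rw [Finset.filter_or, Finset.card_union_of_disjoint]
  · rfl
  · simp only [Finset.disjoint_left, Finset.mem_filter]
    rintro z ⟨_, hz⟩ ⟨_, h⟩; omega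

private lemma coeff_succ (m t : ℕ) :
    ((1 + X + X ^ 2 : Polynomial ℕ) ^ (m + 1)).coeff t
      = cnt m t + (if 1 ≤ t then cnt m (t - 1) else 0)
        + (if 2 ≤ t then cnt m (t - 2) else 0) := by
  have : ((1 + X + X ^ 2 : Polynomial ℕ) ^ (m + 1))
      = (1 + X + X ^ 2 : Polynomial ℕ) ^ m
        + (1 + X + X ^ 2 : Polynomial ℕ) ^ m * X ^ 1
        + (1 + X + X ^ 2 : Polynomial ℕ) ^ m * X ^ 2 := by
    rw [pow_succ]; ring
  rw [this, Polynomial.coeff_add, Polynomial.coeff_add,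
    Polynomial.coeff_mul_X_pow', Polynomial.coeff_mul_X_pow',
    coeff_pow_cnt]
  congr 1
  · congr 1
    split_ifs <;> simp [coeff_pow_cnt]
  · split_ifs <;> simp [coeff_pow_cnt]

/-- The number of Ewald points of SSB(n,k). -/
theorem ewald_SSB_card (n k : ℕ) (hn : 2 ≤ n) (hk : k ≤ n - 1) :
    ({x : Fin n → ℤ |
        ((∀ i, -1 ≤ x i) ∧ x ⟨0, by omega⟩ ≤ 1 ∧
          (k : ℤ) * x ⟨0, by omega⟩ + ∑ i ∈ Finset.univ.erase ⟨0, by omega⟩, x i ≤ 1) ∧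
        ((∀ i, -1 ≤ -(x i)) ∧ -(x ⟨0, by omega⟩) ≤ 1 ∧
          (k : ℤ) * (-(x ⟨0, by omega⟩)) + ∑ i ∈ Finset.univ.erase ⟨0, by omega⟩, -(x i) ≤ 1)}).ncard =
      (((1 + X + X ^ 2 : Polynomial ℕ)) ^ n).coeff n +
        2 * (((1 + X + X ^ 2 : Polynomial ℕ)) ^ n).coeff (n - k) := by
  classical
  obtain ⟨m, rfl⟩ : ∃ m, n = m + 1 := ⟨n - 1, by omega⟩
  have hm : 1 ≤ m := by omega
  have hk' : k ≤ m := by omega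
  set φ : (Fin (m + 1) → Fin 3) → (Fin (m + 1) → ℤ) :=
    fun y i => ((y i : ℕ) : ℤ) - 1 with hφ
  set Q : (Fin (m + 1) → Fin 3) → Prop := fun y =>
    (k : ℤ) * (((y 0 : ℕ) : ℤ) - 1)
        + ∑ i ∈ Finset.univ.erase 0, (((y i : ℕ) : ℤ) - 1) ≤ 1 ∧
      -((k : ℤ) * (((y 0 : ℕ) : ℤ) - 1)
        + ∑ i ∈ Finset.univ.erase 0, (((y i : ℕ) : ℤ) - 1)) ≤ 1 with hQ
  have hzero : (⟨0, by omega⟩ : Fin (m + 1)) = 0 := rfl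
  have hkey : {x : Fin (m + 1) → ℤ |
        ((∀ i, -1 ≤ x i) ∧ x ⟨0, by omega⟩ ≤ 1 ∧
          (k : ℤ) * x ⟨0, by omega⟩ + ∑ i ∈ Finset.univ.erase ⟨0, by omega⟩, x i ≤ 1) ∧
        ((∀ i, -1 ≤ -(x i)) ∧ -(x ⟨0, by omega⟩) ≤ 1 ∧
          (k : ℤ) * (-(x ⟨0, by omega⟩)) + ∑ i ∈ Finset.univ.erase ⟨0, by omega⟩, -(x i) ≤ 1)}
      = φ '' ↑(Finset.univ.filter Q) := by
    ext x
    simp only [Set.mem_setOf_eq, Set.mem_image, Finset.coe_filter, Set.mem_setOf_eq,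
      Finset.mem_univ, true_and, hzero]
    constructor
    · rintro ⟨⟨h1, h2, h3⟩, ⟨h4, h5, h6⟩⟩
      have hbd : ∀ i, -1 ≤ x i ∧ x i ≤ 1 := fun i => ⟨h1 i, by have := h4 i; omega⟩
      refine ⟨fun i => ⟨(x i + 1).toNat, by have := hbd i; omega⟩, ?_, ?_⟩
      · have hx : ∀ i : Fin (m + 1),
            (((((x i + 1).toNat : ℕ)) : ℤ) - 1) = x i := by
          intro i; have := hbd i; omega
        constructor
        · calc (k : ℤ) * ((((x 0 + 1).toNat : ℕ) : ℤ) - 1)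
              + ∑ i ∈ Finset.univ.erase 0, ((((x i + 1).toNat : ℕ) : ℤ) - 1)
              = (k : ℤ) * x 0 + ∑ i ∈ Finset.univ.erase 0, x i := by
                rw [hx 0]; exact congrArg _ (Finset.sum_congr rfl fun i _ => hx i)
            _ ≤ 1 := h3
        · have h6' : (k : ℤ) * (-(x 0)) + ∑ i ∈ Finset.univ.erase 0, -(x i) ≤ 1 := h6
          rw [Finset.sum_neg_distrib] at h6'
          have heq : (k : ℤ) * ((((x 0 + 1).toNat : ℕ) : ℤ) - 1)
              + ∑ i ∈ Finset.univ.erase 0, ((((x i + 1).toNat : ℕ) : ℤ) - 1)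
              = (k : ℤ) * x 0 + ∑ i ∈ Finset.univ.erase 0, x i := by
            rw [hx 0]; exact congrArg _ (Finset.sum_congr rfl fun i _ => hx i)
          rw [heq]; linarith
      · funext i; have := hbd i; simp only [hφ]; omega
    · rintro ⟨y, ⟨hq1, hq2⟩, rfl⟩
      have hb : ∀ i, (0 : ℤ) ≤ ((y i : ℕ) : ℤ) ∧ ((y i : ℕ) : ℤ) ≤ 2 := by
        intro i
        have : (y i : ℕ) < 3 := (y i).is_lt
        omega
      refine ⟨⟨fun i => by have := hb i; simp only [hφ]; omega,
        by have := hb 0; simp only [hφ]; omega, hq1⟩,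
        ⟨fun i => by have := hb i; simp only [hφ]; omega,
        by have := hb 0; simp only [hφ]; omega, ?_⟩⟩
      rw [Finset.sum_neg_distrib]
      simp only [hφ]
      linarith [hq2]
  rw [hkey, Set.ncard_image_of_injective _ (show Function.Injective φ by
    intro y y' h
    funext i
    have := congrFun h i
    simp only [hφ] at this
    exact Fin.ext (by omega)), Set.ncard_coe_finset]
  rw [card_cons_split m Q]
  rw [Fin.sum_univ_three]
  -- rewrite the condition Q (Fin.cons a z) into a condition on T = ∑ z
  have herase : ∀ f : Fin (m + 1) → ℤ,
      ∑ i ∈ Finset.univ.erase 0, f i = ∑ j : Fin m, f j.succ := by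
    intro f
    have h1 := Fin.sum_univ_succ f
    have h2 : ∑ i ∈ Finset.univ.erase (0 : Fin (m + 1)), f i
        = ∑ i, f i - f 0 := Finset.sum_erase_eq_sub (Finset.mem_univ 0)
    rw [h2, h1]; ring
  have hQc : ∀ (a : Fin 3) (z : Fin m → Fin 3), Q (Fin.cons a z) ↔
      ((k : ℤ) * (((a : ℕ) : ℤ) - 1) + (((∑ j, (z j : ℕ) : ℕ) : ℤ) - m) ≤ 1 ∧
        -((k : ℤ) * (((a : ℕ) : ℤ) - 1) + (((∑ j, (z j : ℕ) : ℕ) : ℤ) - m)) ≤ 1) := by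
    intro a z
    have hs : ∑ i ∈ Finset.univ.erase 0,
          ((((Fin.cons a z : Fin (m + 1) → Fin 3) i : ℕ) : ℤ) - 1)
        = ((∑ j, (z j : ℕ) : ℕ) : ℤ) - m := by
      rw [herase (fun i => (((Fin.cons a z : Fin (m + 1) → Fin 3) i : ℕ) : ℤ) - 1)]
      simp only [Fin.cons_succ]
      rw [Finset.sum_sub_distrib, Finset.sum_const, Finset.card_univ, Fintype.card_fin]
      push_cast
      ring
    simp only [hQ]
    rw [hs]
    simp only [Fin.cons_zero]
  have ha0 : (Finset.univ.filter fun z => Q (Fin.cons 0 z)).card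
      = cnt m (m + k - 1) + cnt m (m + k) + cnt m (m + k + 1) := by
    rw [← card_three m (m + k - 1) (m + k) (m + k + 1) (by omega) (by omega) (by omega)]
    congr 1
    apply Finset.filter_congr
    intro z _
    rw [hQc]
    have hv : (((0 : Fin 3) : ℕ) : ℤ) = 0 := rfl
    rw [hv]
    have hT := sum_le m z
    constructor
    · rintro ⟨u1, u2⟩; omega
    · rintro (h | h | h) <;> (constructor <;> omega)
  have ha1 : (Finset.univ.filter fun z => Q (Fin.cons 1 z)).card
      = cnt m (m - 1) + cnt m m + cnt m (m + 1) := by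
    rw [← card_three m (m - 1) m (m + 1) (by omega) (by omega) (by omega)]
    congr 1
    apply Finset.filter_congr
    intro z _
    rw [hQc]
    have hv : (((1 : Fin 3) : ℕ) : ℤ) = 1 := rfl
    rw [hv]
    constructor
    · rintro ⟨u1, u2⟩; omega
    · rintro (h | h | h) <;> (constructor <;> omega)
  rw [ha0, ha1]
  -- symmetry facts
  rcases lt_or_eq_of_le hk' with hkm | hkm
  · have ha2 : (Finset.univ.filter fun z => Q (Fin.cons 2 z)).card
        = cnt m (m - k - 1) + cnt m (m - k) + cnt m (m - k + 1) := by
      rw [← card_three m (m - k - 1) (m - k) (m - k + 1) (by omega) (by omega) (by omega)]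
      congr 1
      apply Finset.filter_congr
      intro z _
      rw [hQc]
      have hv : (((2 : Fin 3) : ℕ) : ℤ) = 2 := rfl
      rw [hv]
      constructor
      · rintro ⟨u1, u2⟩; omega
      · rintro (h | h | h) <;> (constructor <;> omega)
    rw [ha2]
    have s1 : cnt m (m + k - 1) = cnt m (m - k + 1) := by
      have := cnt_symm m (m - k + 1) (by omega)
      rw [show 2 * m - (m - k + 1) = m + k - 1 by omega] at this
      exact this
    have s2 : cnt m (m + k) = cnt m (m - k) := by
      have := cnt_symm m (m - k) (by omega)
      rw [show 2 * m - (m - k) = m + k by omega] at this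
      exact this
    have s3 : cnt m (m + k + 1) = cnt m (m - k - 1) := by
      have := cnt_symm m (m - k - 1) (by omega)
      rw [show 2 * m - (m - k - 1) = m + k + 1 by omega] at this
      exact this
    have c1 : ((1 + X + X ^ 2 : Polynomial ℕ) ^ (m + 1)).coeff (m + 1)
        = cnt m (m + 1) + cnt m m + cnt m (m - 1) := by
      rw [coeff_succ]
      rw [if_pos (by omega), if_pos (by omega)]
      rw [show m + 1 - 1 = m by omega, show m + 1 - 2 = m - 1 by omega]
    have c2 : ((1 + X + X ^ 2 : Polynomial ℕ) ^ (m + 1)).coeff (m + 1 - k)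
        = cnt m (m - k + 1) + cnt m (m - k) + cnt m (m - k - 1) := by
      rw [coeff_succ]
      rw [if_pos (by omega), if_pos (by omega)]
      rw [show m + 1 - k = m - k + 1 by omega, show m - k + 1 - 1 = m - k by omega,
        show m - k + 1 - 2 = m - k - 1 by omega]
    rw [c1, c2, s1, s2, s3]
    ring
  · -- k = m
    subst hkm
    have ha2 : (Finset.univ.filter fun z => Q (Fin.cons 2 z)).card
        = cnt k 0 + cnt k 1 := by
      rw [← card_two k 0 1 (by omega)]
      congr 1
      apply Finset.filter_congr
      intro z _
      rw [hQc]
      have hv : (((2 : Fin 3) : ℕ) : ℤ) = 2 := rfl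
      rw [hv]
      constructor
      · rintro ⟨u1, u2⟩; omega
      · rintro (h | h) <;> (constructor <;> omega)
    rw [ha2]
    have s1 : cnt k (k + k - 1) = cnt k 1 := by
      have := cnt_symm k 1 (by omega)
      rw [show 2 * k - 1 = k + k - 1 by omega] at this
      exact this
    have s2 : cnt k (k + k) = cnt k 0 := by
      have := cnt_symm k 0 (by omega)
      rw [show 2 * k - 0 = k + k by omega] at this
      exact this
    have s3 : cnt k (k + k + 1) = 0 := cnt_zero k _ (by omega)
    have c1 : ((1 + X + X ^ 2 : Polynomial ℕ) ^ (k + 1)).coeff (k + 1)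
        = cnt k (k + 1) + cnt k k + cnt k (k - 1) := by
      rw [coeff_succ]
      rw [if_pos (by omega), if_pos (by omega)]
      rw [show k + 1 - 1 = k by omega, show k + 1 - 2 = k - 1 by omega]
    have c2 : ((1 + X + X ^ 2 : Polynomial ℕ) ^ (k + 1)).coeff (k + 1 - k)
        = cnt k 1 + cnt k 0 := by
      rw [coeff_succ]
      rw [show k + 1 - k = 1 by omega, if_pos (by omega), if_neg (by omega)]
      norm_num
    rw [c1, c2, s1, s2, s3]
    ring
end

section
/- For every n ≥ 2 and 0 ≤ k ≤ n-1: |E(SSB(n,0))| = 3·|E(Δ_{n-1})| and |E(SSB(n,1))| = |E(Δ_n)|, where |E(Δ_m)| = [X^{m+1}](1+X+X^2)^{m+1}. -/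
/-!
On the Ewald set `Z^n ∩ P ∩ (-P)` every pair of opposite constraints becomes a bound `|ℓ(x)| ≤ 1`.
For `k = 0` the constraint `|x₂ + ⋯ + xₙ| ≤ 1` does not involve `x₁`, so `E(SSB(n,0))` splits as
`{-1, 0, 1} × E(Δ_{n-1})`. For `k = 1` the constraints of `SSB(n,1)` are those of `Δ_n` together
with `|x₁| ≤ 1`, which the box constraints already imply, so `E(SSB(n,1)) = E(Δ_n)`.
-/

/-- Ewald set of SSB(n,k) = {x : x_i ≥ -1 ∀i, x_1 ≤ 1, k x_1 + x_2 + ⋯ + x_n ≤ 1}. -/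
def ssbEwald (n k : ℕ) (h : 0 < n) : Set (Fin n → ℤ) :=
  {x | ((∀ i, -1 ≤ x i) ∧ x ⟨0, h⟩ ≤ 1 ∧
          (k : ℤ) * x ⟨0, h⟩ + ∑ i ∈ Finset.univ.erase ⟨0, h⟩, x i ≤ 1) ∧
       ((∀ i, -1 ≤ -(x i)) ∧ -(x ⟨0, h⟩) ≤ 1 ∧
          (k : ℤ) * (-(x ⟨0, h⟩)) + ∑ i ∈ Finset.univ.erase ⟨0, h⟩, -(x i) ≤ 1)}

/-- Ewald set of the monotone simplex Δ_m. -/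
def simplexEwald (m : ℕ) : Set (Fin m → ℤ) :=
  {x | ((∀ i, -1 ≤ x i) ∧ ∑ i, x i ≤ 1) ∧ ((∀ i, -1 ≤ -(x i)) ∧ ∑ i, -(x i) ≤ 1)}

open Finset

theorem Fin.sum_univ_erase_zero {M : Type*} [AddCommMonoid M] {m : ℕ} (x : Fin (m + 1) → M) :
    ∑ i ∈ univ.erase 0, x i = ∑ i : Fin m, x i.succ := by
  rw [Fin.univ_succ, Finset.erase_cons, Finset.sum_map]
  rfl

theorem mem_simplexEwald {m : ℕ} {x : Fin m → ℤ} :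
    x ∈ simplexEwald m ↔ (∀ i, x i ∈ Set.Icc (-1) 1) ∧ |∑ i, x i| ≤ 1 := by
  simp only [simplexEwald, Set.mem_ofPred_eq, Set.mem_Icc, abs_le, sum_neg_distrib, neg_le]
  grind

theorem mem_ssbEwald_succ {m k : ℕ} {x : Fin (m + 1) → ℤ} :
    x ∈ ssbEwald (m + 1) k m.succ_pos ↔
      (∀ i, x i ∈ Set.Icc (-1) 1) ∧ |k * x 0 + ∑ i : Fin m, x i.succ| ≤ 1 := by
  simp only [ssbEwald, Set.mem_ofPred_eq, Set.mem_Icc, abs_le, Fin.mk_zero,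
    Fin.sum_univ_erase_zero, sum_neg_distrib, neg_le]
  grind

theorem ssbEwald_zero_eq_image (m : ℕ) :
    ssbEwald (m + 1) 0 m.succ_pos =
      Fin.consEquiv (fun _ ↦ ℤ) '' (Set.Icc (-1) 1 ×ˢ simplexEwald m) := by
  ext x
  rw [Equiv.image_eq_preimage_symm]
  simp only [Set.mem_preimage, Fin.consEquiv_symm_apply, Set.mem_prod, mem_ssbEwald_succ,
    mem_simplexEwald, Fin.forall_fin_succ, Nat.cast_zero, zero_mul, zero_add, Fin.tail, and_assoc]

theorem ssbEwald_one_eq (m : ℕ) : ssbEwald (m + 1) 1 m.succ_pos = simplexEwald (m + 1) := by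
  ext x
  rw [mem_ssbEwald_succ, mem_simplexEwald, Fin.sum_univ_succ, Nat.cast_one, one_mul]

/-- |E(SSB(n,0))| = 3|E(Δ_{n-1})| and |E(SSB(n,1))| = |E(Δ_n)|. -/
theorem ewald_SSB_zero_one (n : ℕ) (hn : 2 ≤ n) :
    (ssbEwald n 0 (by omega)).ncard = 3 * (simplexEwald (n - 1)).ncard ∧
    (ssbEwald n 1 (by omega)).ncard = (simplexEwald n).ncard := by
  obtain ⟨m, rfl⟩ : ∃ m, n = m + 1 := ⟨n - 1, by omega⟩
  refine ⟨?_, by rw [ssbEwald_one_eq]⟩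
  rw [ssbEwald_zero_eq_image, Set.ncard_image_of_injective _ (Equiv.injective _), Set.ncard_prod,
    Nat.add_sub_cancel, ← Finset.coe_Icc, Set.ncard_coe_finset, Int.card_Icc]
  rfl
end

section
/- For fixed n ≥ 2, the quantity [X^n](1+X+X^2)^n + 2·[X^{n-k}](1+X+X^2)^n is strictly decreasing in k for 0 ≤ k ≤ n-1. -/
open Polynomial

noncomputable def tp : Polynomial ℕ := 1 + X + X ^ 2

lemma tp_natDegree : tp.natDegree ≤ 2 := by
  unfold tp; compute_degree

lemma tp_reflect : reflect 2 tp = tp := by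
  unfold tp
  rw [show (1 + X + X^2 : Polynomial ℕ) = X^0 + X^1 + X^2 by ring,
    reflect_add, reflect_add, reflect_monomial, reflect_monomial, reflect_monomial,
    revAt_le (by norm_num), revAt_le (by norm_num), revAt_le (by norm_num)]
  ring

lemma tp_pow_reflect (n : ℕ) : reflect (2 * n) (tp ^ n) = tp ^ n := by
  induction n with
  | zero => simp
  | succ n ih =>
    rw [show 2 * (n+1) = 2 + 2 * n by ring, pow_succ, mul_comm (tp ^ n) tp,
      reflect_mul tp (tp ^ n) tp_natDegree
        (le_trans (natDegree_pow_le) (by nlinarith [tp_natDegree])),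
      tp_reflect, ih, mul_comm]

lemma tp_symm {n m : ℕ} (hm : m ≤ 2 * n) : (tp ^ n).coeff (2 * n - m) = (tp ^ n).coeff m := by
  conv_rhs => rw [← tp_pow_reflect n]
  rw [coeff_reflect, revAt_le hm]

lemma tp_rec (n m : ℕ) :
    (tp ^ (n+1)).coeff (m+2) =
      (tp ^ n).coeff (m+2) + (tp ^ n).coeff (m+1) + (tp ^ n).coeff m := by
  rw [pow_succ, mul_comm, show tp * tp ^ n = tp^n + X * tp^n + X^2 * tp^n by unfold tp; ring]
  simp [coeff_add, coeff_X_mul, show m+2 = m+1+1 from rfl, coeff_X_pow_mul (tp^n) 2 m]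

lemma tp_c0 (n : ℕ) : (tp ^ n).coeff 0 = 1 := by
  rw [coeff_zero_eq_eval_zero]; simp [tp]

lemma tp_c1 (n : ℕ) : (tp ^ (n+1)).coeff 1 = (tp ^ n).coeff 1 + 1 := by
  rw [pow_succ, mul_comm, show tp * tp ^ n = tp^n + X * tp^n + X^2 * tp^n by unfold tp; ring]
  rw [show (X^2 * tp^n : Polynomial ℕ) = tp^n * X^2 by ring]
  simp [coeff_add, coeff_X_mul, coeff_mul_X_pow', tp_c0]

lemma tp_mono : ∀ n m : ℕ, m < n → (tp ^ n).coeff m ≤ (tp ^ n).coeff (m+1) := by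
  intro n
  induction n with
  | zero => omega
  | succ n ih =>
    intro m hm
    match m with
    | 0 =>
      rw [tp_c0, tp_c1]; omega
    | 1 =>
      rw [tp_c1, tp_rec n 0, tp_c0]; simp only [zero_add]; omega
    | (j+2) =>
      rw [show j+2+1 = j+1+2 from rfl, tp_rec n (j+1), tp_rec n j,
        show j+1+2 = j+3 by omega, show j+1+1 = j+2 by omega]
      have hkey : (tp ^ n).coeff j ≤ (tp ^ n).coeff (j+3) := by
        rcases Nat.lt_or_ge (j+3) (n+1) with h | h
        · calc (tp ^ n).coeff j ≤ (tp ^ n).coeff (j+1) := ih j (by omega)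
            _ ≤ (tp ^ n).coeff (j+2) := ih (j+1) (by omega)
            _ ≤ (tp ^ n).coeff (j+3) := ih (j+2) (by omega)
        · have hj : j + 3 = n + 1 := by omega
          have hs : (tp ^ n).coeff (2*n - (n+1)) = (tp ^ n).coeff (n+1) := tp_symm (by omega)
          have h2 : 2*n - (n+1) = j + 1 := by omega
          rw [hj, ← hs, h2]
          exact ih j (by omega)
      omega

lemma tp_smono : ∀ n : ℕ, 2 ≤ n → ∀ m : ℕ, m < n → (tp ^ n).coeff m < (tp ^ n).coeff (m+1) := by
  intro n hn
  induction n, hn using Nat.le_induction with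
  | base =>
    intro m hm
    have h1 : (tp ^ 2).coeff 1 = 2 := by
      rw [show (2:ℕ) = 1 + 1 from rfl, tp_c1, pow_one]
      simp [tp, coeff_add, coeff_one, coeff_X, coeff_X_pow]
    have h2 : (tp ^ 2).coeff 2 = 3 := by
      rw [show (2:ℕ) = 1 + 1 from rfl, tp_rec 1 0, tp_c0, pow_one]
      simp [tp, coeff_add, coeff_one, coeff_X, coeff_X_pow]
    interval_cases m
    · rw [tp_c0, show (0:ℕ)+1 = 1 from rfl]; omega
    · rw [show (1:ℕ)+1 = 2 from rfl]; omega
  | succ n hn ih =>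
    intro m hm
    match m with
    | 0 =>
      obtain ⟨k, rfl⟩ : ∃ k, n = k + 1 := ⟨n - 1, by omega⟩
      rw [tp_c0, tp_c1, tp_c1]; omega
    | 1 =>
      rw [tp_c1, tp_rec n 0, tp_c0]
      simp only [zero_add]
      have : 1 ≤ (tp ^ n).coeff 2 := by
        calc 1 = (tp ^ n).coeff 0 := (tp_c0 n).symm
          _ ≤ (tp ^ n).coeff 1 := tp_mono n 0 (by omega)
          _ ≤ (tp ^ n).coeff 2 := tp_mono n 1 (by omega)
      omega
    | (j+2) =>
      rw [show j+2+1 = j+1+2 from rfl, tp_rec n (j+1), tp_rec n j,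
        show j+1+2 = j+3 by omega, show j+1+1 = j+2 by omega]
      have hkey : (tp ^ n).coeff j < (tp ^ n).coeff (j+3) := by
        rcases Nat.lt_or_ge (j+3) (n+1) with h | h
        · calc (tp ^ n).coeff j < (tp ^ n).coeff (j+1) := ih j (by omega)
            _ ≤ (tp ^ n).coeff (j+2) := tp_mono n (j+1) (by omega)
            _ ≤ (tp ^ n).coeff (j+3) := tp_mono n (j+2) (by omega)
        · have hj : j + 3 = n + 1 := by omega
          have hs : (tp ^ n).coeff (2*n - (n+1)) = (tp ^ n).coeff (n+1) := tp_symm (by omega)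
          have h2 : 2*n - (n+1) = j + 1 := by omega
          rw [hj, ← hs, h2]
          exact ih j (by omega)
      omega

lemma tp_lt {n a b : ℕ} (hn : 2 ≤ n) (hab : a < b) (hb : b ≤ n) :
    (tp ^ n).coeff a < (tp ^ n).coeff b := by
  induction b, hab using Nat.le_induction with
  | base => exact tp_smono n hn a (by omega)
  | succ b hb' ih =>
    exact lt_trans (ih (by omega)) (tp_smono n hn b (by omega))

/-- For fixed n ≥ 2, the quantity [Xⁿ](1+X+X²)ⁿ + 2[X^{n-k}](1+X+X²)ⁿ is strictly
decreasing in k for 0 ≤ k ≤ n-1. -/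
theorem ewald_SSB_count_strict_anti (n : ℕ) (hn : 2 ≤ n) :
    ∀ k₁ k₂ : ℕ, k₁ < k₂ → k₂ ≤ n - 1 →
      (((1 + X + X ^ 2 : Polynomial ℕ)) ^ n).coeff n +
          2 * (((1 + X + X ^ 2 : Polynomial ℕ)) ^ n).coeff (n - k₂) <
        (((1 + X + X ^ 2 : Polynomial ℕ)) ^ n).coeff n +
          2 * (((1 + X + X ^ 2 : Polynomial ℕ)) ^ n).coeff (n - k₁) := by
  intro k₁ k₂ h12 h2
  rw [show (1 + X + X ^ 2 : Polynomial ℕ) = tp from rfl]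
  have := tp_lt (n := n) (a := n - k₂) (b := n - k₁) hn (by omega) (by omega)
  omega
end
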